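/- arXiv:2012.00815 — 3 statements merged into one kernel-verified Lean document; each statement's English description precedes it below -/
import Mathlib

section
/- Let A ∈ ℂ^{n×n} and denote by a_k the k-th row of A. Then det(A) = D_{1,n}(a_1) · D_{2,n}(a_2) · ⋯ · D_{n,n}(a_n), where each D_{k,n}(a_k) is a C(n,k−1) × C(n,k) matrix defined by the recursion given in the context (in particular the product of these matrices is a 1×1 matrix, i.e. a scalar). -/
open Matrix

/-- The matrices `D_{k,n}(a) ∈ ℂ^{C(n,k-1) × C(n,k)}` of Jurkat–Ryser, defined
recursively: `D_{1,n}(a)` is the row vector `[a 1, …, a n]`; `D_{n,n}(a)` is the column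
vector `[a n, -a (n-1), …, (-1)^(n-1) • a 1]ᵀ`; and for `2 ≤ k ≤ n - 1`,
`D_{k,n}(a)` is the block matrix
`[[D_{k-1,n-1}(a 2, …, a n), 0], [(-1)^(k-1) a 1 • I, D_{k,n-1}(a 2, …, a n)]]`.
(Values outside `1 ≤ k ≤ n` are junk.) -/
noncomputable def D : (n : ℕ) → (k : ℕ) → (Fin n → ℂ) →
    Matrix (Fin (n.choose (k - 1))) (Fin (n.choose k)) ℂ
  | 0, _, _ => 0
  | _ + 1, 0, _ => 0
  | n + 1, 1, a =>
      Matrix.of fun _ (j : Fin ((n + 1).choose 1)) =>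
        a (Fin.cast (Nat.choose_one_right (n + 1)) j)
  | n + 1, k + 2, a =>
      if h : k + 2 = n + 1 then
        Matrix.of fun (i : Fin ((n + 1).choose (k + 1))) _ =>
          (-1 : ℂ) ^ (i : ℕ) *
            a (Fin.rev (Fin.cast
              (show (n + 1).choose (k + 1) = n + 1 by
                have hkn : k + 1 = n := by omega
                rw [hkn]; exact Nat.choose_succ_self_right n) i))
      else if h2 : k + 2 ≤ n then
        Matrix.reindex
          (finSumFinEquiv.trans (finCongr (Nat.choose_succ_succ n k).symm))
          (finSumFinEquiv.trans (finCongr (Nat.choose_succ_succ n (k + 1)).symm))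
          (Matrix.fromBlocks
            (D n (k + 1) (a ∘ Fin.succ))
            (0 : Matrix (Fin (n.choose k)) (Fin (n.choose (k + 2))) ℂ)
            (((-1 : ℂ) ^ (k + 1) * a 0) •
              (1 : Matrix (Fin (n.choose (k + 1))) (Fin (n.choose (k + 1))) ℂ))
            (D n (k + 2) (a ∘ Fin.succ)))
      else 0

/-- The chain product `D_{1,n}(v 0) * D_{2,n}(v 1) * ⋯ * D_{k,n}(v (k-1))`, a
`C(n,0) × C(n,k)` matrix. -/
noncomputable def DChain (n : ℕ) (v : ℕ → Fin n → ℂ) :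
    (k : ℕ) → Matrix (Fin (n.choose 0)) (Fin (n.choose k)) ℂ
  | 0 => 1
  | k + 1 => DChain n v k *
      Matrix.reindex (finCongr (congrArg n.choose (Nat.succ_sub_one k))) (Equiv.refl _)
        (D n (k + 1) (v k))


/-!
For `k ≤ n` the partial product `D_{1,n}(a_1) ⋯ D_{k,n}(a_k)` is the row of `k × k` minors of the
first `k` rows, indexed by `k`-subsets of the columns. The block structure of `D` splits these
subsets according to whether they contain the first column: on subsets avoiding it the row is the
chain of the matrix with that column deleted, and on subsets containing it it obeys the Laplace
expansion along the first column. For `k = n` the latter is the Laplace expansion of `det A`.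
-/

open Finset

def eraseAt {α : Type*} (v : ℕ → α) (j : ℕ) : ℕ → α :=
  fun t => if t < j then v t else v (t + 1)

def dropFirstCol {n : ℕ} (v : ℕ → Fin (n + 1) → ℂ) : ℕ → Fin n → ℂ :=
  fun i => v i ∘ Fin.succ

/-- The reindexing of the block case of `D`: `inl` indexes the `(m+1)`-subsets of `{0, …, n}`
containing `0`, `inr` those avoiding it. -/
def choosePascalEquiv (n m : ℕ) :
    Fin (n.choose m) ⊕ Fin (n.choose (m + 1)) ≃ Fin ((n + 1).choose (m + 1)) :=
  finSumFinEquiv.trans (finCongr (Nat.choose_succ_succ n m).symm)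

lemma choosePascalEquiv_inl_val (n m : ℕ) (i : Fin (n.choose m)) :
    (choosePascalEquiv n m (.inl i) : ℕ) = i := rfl

lemma choosePascalEquiv_inr_val (n m : ℕ) (i : Fin (n.choose (m + 1))) :
    (choosePascalEquiv n m (.inr i) : ℕ) = n.choose m + i := rfl

instance (n : ℕ) : Subsingleton (Fin (n.choose 0)) :=
  Fin.subsingleton_iff_le_one.2 (Nat.choose_zero_right n).le

instance (n : ℕ) : Subsingleton (Fin (n.choose n)) :=
  Fin.subsingleton_iff_le_one.2 (Nat.choose_self n).le

lemma D_one_apply {n : ℕ} (a : Fin (n + 1) → ℂ) (p : Fin ((n + 1).choose 0))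
    (q : Fin ((n + 1).choose 1)) (hq : (q : ℕ) < n + 1) :
    D (n + 1) 1 a p q = a ⟨q, hq⟩ := rfl

lemma D_self_apply {n : ℕ} (a : Fin (n + 1) → ℂ) (i : Fin ((n + 1).choose (n + 1 - 1)))
    (q : Fin ((n + 1).choose (n + 1))) (w : ℕ) (hi : (i : ℕ) = w) (hw : w ≤ n) :
    D (n + 1) (n + 1) a i q = (-1) ^ w * a ⟨n - w, by omega⟩ := by
  subst hi
  rcases n with _ | n
  · have hi0 : (i : ℕ) = 0 := by omega
    simp [D_one_apply a i q (by simpa using q.isLt), hi0, Fin.fin_one_eq_zero]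
  · rw [D, dif_pos rfl, of_apply]
    congr 2
    exact Fin.ext (by simp [Fin.rev])

/-- The block recursion of `D` also holds for `k + 2 = n + 1`, where the right column of blocks
is empty. -/
lemma D_apply_choosePascalEquiv {n k : ℕ} (hk : k + 1 ≤ n) (a : Fin (n + 1) → ℂ)
    (s : Fin (n.choose k) ⊕ Fin (n.choose (k + 1)))
    (t : Fin (n.choose (k + 1)) ⊕ Fin (n.choose (k + 2))) :
    D (n + 1) (k + 2) a (choosePascalEquiv n k s) (choosePascalEquiv n (k + 1) t) =
      fromBlocks (D n (k + 1) (a ∘ Fin.succ))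
        (0 : Matrix (Fin (n.choose k)) (Fin (n.choose (k + 2))) ℂ)
        (((-1) ^ (k + 1) * a 0) • (1 : Matrix (Fin (n.choose (k + 1))) _ ℂ))
        (D n (k + 2) (a ∘ Fin.succ)) s t := by
  by_cases hlt : k + 2 ≤ n
  · rw [D, dif_neg (by omega), dif_pos hlt]
    simp [choosePascalEquiv, reindex_apply]
  obtain rfl : n = k + 1 := by omega
  rcases t with t | t
  swap
  · exact absurd t.isLt (by simp [Nat.choose_succ_self])
  have hck : (k + 1).choose k = k + 1 := Nat.choose_succ_self_right k
  rcases s with s | s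
  · have hs : (s : ℕ) < k + 1 := lt_of_lt_of_eq s.isLt hck
    rw [fromBlocks_apply₁₁, D_self_apply _ _ _ s (choosePascalEquiv_inl_val _ _ s) (by omega),
      D_self_apply _ _ _ s rfl (by omega)]
    congr 2
    exact Fin.ext (by simp; omega)
  · have hs : (choosePascalEquiv (k + 1) k (.inr s) : ℕ) = k + 1 := by
      simp [choosePascalEquiv_inr_val, Subsingleton.elim s ⟨0, by simp⟩]
    rw [fromBlocks_apply₂₁, D_self_apply _ _ _ _ hs le_rfl, Matrix.smul_apply,
      one_apply, if_pos (Subsingleton.elim s t)]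
    simp

lemma DChain_zero_apply (n : ℕ) (v : ℕ → Fin n → ℂ) (p q : Fin (n.choose 0)) :
    DChain n v 0 p q = 1 := by
  rw [DChain, one_apply, if_pos (Subsingleton.elim p q)]

lemma DChain_succ_apply (n : ℕ) (v : ℕ → Fin n → ℂ) (k : ℕ) (p : Fin (n.choose 0))
    (q : Fin (n.choose (k + 1))) :
    DChain n v (k + 1) p q = ∑ r, DChain n v k p r * D n (k + 1) (v k) r q := by
  rw [DChain, mul_apply]
  rfl

lemma DChain_one_apply (n : ℕ) (v : ℕ → Fin n → ℂ) (p : Fin (n.choose 0))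
    (q : Fin (n.choose 1)) :
    DChain n v 1 p q = v 0 (Fin.cast (Nat.choose_one_right n) q) := by
  rcases n with _ | n
  · exact q.elim0
  · rw [DChain_succ_apply, Fintype.sum_subsingleton _ p, DChain_zero_apply, one_mul]
    rfl

lemma DChain_congr (n : ℕ) {v w : ℕ → Fin n → ℂ} (k : ℕ) (h : ∀ i < k, v i = w i) :
    DChain n v k = DChain n w k := by
  induction k with
  | zero => rfl
  | succ k ih =>
    ext p q
    rw [DChain_succ_apply, DChain_succ_apply, ih fun i hi => h i (by omega), h k (by omega)]

lemma DChain_apply_choosePascalEquiv_inr {n m : ℕ} (hm : m ≤ n) (v : ℕ → Fin (n + 1) → ℂ)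
    (p : Fin ((n + 1).choose 0)) (p' : Fin (n.choose 0)) (i : Fin (n.choose (m + 1))) :
    DChain (n + 1) v (m + 1) p (choosePascalEquiv n m (.inr i)) =
      DChain n (dropFirstCol v) (m + 1) p' i := by
  induction m with
  | zero =>
    rw [DChain_one_apply, DChain_one_apply]
    simp only [dropFirstCol, Function.comp_apply]
    congr 1
    exact Fin.ext (by simp [choosePascalEquiv_inr_val]; omega)
  | succ m ih =>
    rw [DChain_succ_apply, DChain_succ_apply, ← (choosePascalEquiv n m).sum_comp,
      Fintype.sum_sum_type]
    simp only [D_apply_choosePascalEquiv (by omega : m + 1 ≤ n), fromBlocks_apply₁₂,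
      fromBlocks_apply₂₂, Matrix.zero_apply, mul_zero, sum_const_zero, zero_add, ih (by omega)]
    rfl

lemma DChain_apply_choosePascalEquiv_inl {n m : ℕ} (hm : m ≤ n) (v : ℕ → Fin (n + 1) → ℂ)
    (p : Fin ((n + 1).choose 0)) (p' : Fin (n.choose 0)) (i : Fin (n.choose m)) :
    DChain (n + 1) v (m + 1) p (choosePascalEquiv n m (.inl i)) =
      ∑ j ∈ range (m + 1), (-1) ^ j * v j 0 * DChain n (eraseAt (dropFirstCol v) j) m p' i := by
  induction m with
  | zero =>
    have hi : (i : ℕ) = 0 := by simpa using i.isLt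
    rw [DChain_one_apply, sum_range_one, DChain_zero_apply]
    simp only [pow_zero, one_mul, mul_one]
    congr 1
    exact Fin.ext (by simp [choosePascalEquiv_inl_val, hi])
  | succ m ih =>
    rw [DChain_succ_apply, ← (choosePascalEquiv n m).sum_comp, Fintype.sum_sum_type]
    simp only [D_apply_choosePascalEquiv (by omega : m + 1 ≤ n), fromBlocks_apply₁₁,
      fromBlocks_apply₂₁, ih (by omega),
      DChain_apply_choosePascalEquiv_inr (by omega : m ≤ n) v p p', Matrix.smul_apply, one_apply,
      smul_eq_mul]
    rw [sum_range_succ]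
    congr 1
    · simp only [sum_mul]
      rw [sum_comm]
      refine sum_congr rfl fun j hj => ?_
      have hj' : j < m + 1 := mem_range.mp hj
      have harg : eraseAt (dropFirstCol v) j m = v (m + 1) ∘ Fin.succ := by
        simp [eraseAt, dropFirstCol, show ¬ m < j by omega]
      rw [DChain_succ_apply, harg, mul_sum]
      exact sum_congr rfl fun x _ => by ring
    -- the new term `j = m + 1` comes from the scalar block `(-1) ^ (m + 1) * v (m + 1) 0 • 1`
    · rw [sum_eq_single i (fun x _ hx => by simp [hx]) (by simp), if_pos rfl, mul_one,
        DChain_congr n (v := eraseAt (dropFirstCol v) (m + 1)) (w := dropFirstCol v) (m + 1)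
          fun t ht => by simp [eraseAt, ht]]
      ring

lemma det_of_succ_column_zero {n : ℕ} (v : ℕ → Fin (n + 1) → ℂ) :
    (of fun i j : Fin (n + 1) => v i j).det =
      ∑ j ∈ range (n + 1),
        (-1) ^ j * v j 0 * (of fun r c : Fin n => eraseAt (dropFirstCol v) j r c).det := by
  rw [det_succ_column_zero, ← Fin.sum_univ_eq_sum_range fun j =>
    (-1) ^ j * v j 0 * (of fun r c : Fin n => eraseAt (dropFirstCol v) j r c).det]
  refine sum_congr rfl fun j _ => ?_
  congr 2
  ext r c
  simp only [of_apply, submatrix_apply, eraseAt, dropFirstCol, Fin.succAbove, Fin.lt_def,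
    Fin.val_castSucc]
  split_ifs <;> rfl

lemma DChain_self_apply (n : ℕ) (v : ℕ → Fin n → ℂ) (p : Fin (n.choose 0))
    (q : Fin (n.choose n)) : DChain n v n p q = (of fun i j : Fin n => v i j).det := by
  induction n with
  | zero => rw [DChain_zero_apply, det_fin_zero]
  | succ n ih =>
    obtain ⟨i | i, rfl⟩ := (choosePascalEquiv n n).surjective q
    · rw [DChain_apply_choosePascalEquiv_inl le_rfl v p ⟨0, by simp⟩ i,
        det_of_succ_column_zero]
      simp only [ih]
    · exact absurd i.isLt (by simp [Nat.choose_succ_self])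

/-- for `A ∈ ℂ^{n × n}` with rows `a 1, …, a n`,
`det A = D_{1,n}(a 1) * D_{2,n}(a 2) * ⋯ * D_{n,n}(a n)`; the product of these matrices
is a `C(n,0) × C(n,n)`, i.e. `1 × 1`, matrix, whose (unique) entry is `det A`. -/
theorem det_eq_D_chain_entry (n : ℕ) (A : Matrix (Fin n) (Fin n) ℂ)
    (p : Fin (n.choose 0)) (q : Fin (n.choose n)) :
    DChain n (fun k j => if h : k < n then A ⟨k, h⟩ j else 0) n p q = A.det := by
  rw [DChain_self_apply]
  congr 1
  ext i j
  simp
end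

section
/- Let A_i, B_{ij} ∈ ℝ^{n_i × n_i} (i,j = 1,…,m) define an m-parameter eigenvalue problem, and suppose (λ_1,…,λ_m) ∈ ℂ^m and nonzero vectors x_1,…,x_m (x_i ∈ ℂ^{n_i}) satisfy A_i x_i = ∑_{j=1}^m λ_j B_{ij} x_i for all i = 1,…,m. Then for every i = 1,…,m, the Kronecker product x = x_1 ⊗ x_2 ⊗ ⋯ ⊗ x_m satisfies the generalized eigenvalue equation Δ_i x = λ_i Δ_0 x. -/
open Matrix

/-- The operator determinant `|C k l|_⊗` of an `m × m` array of matrices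
`C k l : Matrix (Fin (n k)) (Fin (n k)) ℂ`: the matrix
`∑ σ, sgn σ • C 0 (σ 0) ⊗ C 1 (σ 1) ⊗ ⋯ ⊗ C (m-1) (σ (m-1))`, realized on
multi-indices, so that the `m`-fold Kronecker product has entries
`∏ k, C k (σ k) (i k) (j k)`. -/
noncomputable def opDet (m : ℕ) (n : Fin m → ℕ)
    (C : (k : Fin m) → Fin m → Matrix (Fin (n k)) (Fin (n k)) ℂ) :
    Matrix ((k : Fin m) → Fin (n k)) ((k : Fin m) → Fin (n k)) ℂ :=
  ∑ σ : Equiv.Perm (Fin m), (Equiv.Perm.sign σ : ℤ) •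
    Matrix.of fun i j => ∏ k, C k (σ k) (i k) (j k)

lemma opDet_mulVec (m : ℕ) (n : Fin m → ℕ)
    (C : (k : Fin m) → Fin m → Matrix (Fin (n k)) (Fin (n k)) ℂ)
    (x : (i : Fin m) → Fin (n i) → ℂ) (ii : (k : Fin m) → Fin (n k)) :
    (opDet m n C *ᵥ fun jj => ∏ p, x p (jj p)) ii
      = (Matrix.of fun k l => (C k l *ᵥ x k) (ii k)).det := by
  rw [← Matrix.det_transpose, Matrix.det_apply']
  simp only [opDet, mulVec, dotProduct, Matrix.sum_apply, Matrix.smul_apply,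
    Matrix.of_apply, Finset.sum_mul, transpose_apply]
  simp only [zsmul_eq_mul]
  rw [Finset.sum_comm]
  refine Finset.sum_congr rfl fun σ _ => ?_
  have : ∀ jj : (k : Fin m) → Fin (n k),
      ((Equiv.Perm.sign σ : ℤ) : ℂ) * (∏ k, C k (σ k) (ii k) (jj k)) * ∏ p, x p (jj p)
      = ((Equiv.Perm.sign σ : ℤ) : ℂ) * ∏ k, C k (σ k) (ii k) (jj k) * x k (jj k) := by
    intro jj
    rw [mul_assoc, ← Finset.prod_mul_distrib]
  simp only [this]
  rw [← Finset.mul_sum, ← Fintype.prod_sum fun k j => C k (σ k) (ii k) j * x k j]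

/-- if `(λ, (x 0, …, x (m-1)))` is an eigenvalue/eigenvector-tuple of the
`m`-parameter eigenvalue problem given by real matrices `A i`, `B i j` (i.e. each
`x i ≠ 0` and `A i *ᵥ x i = ∑ j, λ j • (B i j *ᵥ x i)`), then for every `i` the Kronecker
product `x = x 0 ⊗ ⋯ ⊗ x (m-1)` satisfies `Δ i *ᵥ x = λ i • (Δ 0 *ᵥ x)`, where `Δ 0` is
the operator determinant of the array `B` and `Δ i` is the operator determinant of the
array obtained from `B` by replacing its `i`-th column with `(A 0, …, A (m-1))`. -/
theorem mEP_implies_generalized_eigenvalue_problem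
    (m : ℕ) (n : Fin m → ℕ)
    (A : (i : Fin m) → Matrix (Fin (n i)) (Fin (n i)) ℝ)
    (B : (i : Fin m) → Fin m → Matrix (Fin (n i)) (Fin (n i)) ℝ)
    (lam : Fin m → ℂ) (x : (i : Fin m) → Fin (n i) → ℂ)
    (hx : ∀ i, x i ≠ 0)
    (heig : ∀ i, (A i).map (Complex.ofReal) *ᵥ x i
        = ∑ j, lam j • ((B i j).map (Complex.ofReal) *ᵥ x i)) :
    ∀ i : Fin m,
      opDet m n (fun k l => if l = i then (A k).map (Complex.ofReal)
          else (B k l).map (Complex.ofReal))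
        *ᵥ (fun jj => ∏ p, x p (jj p))
      = lam i •
        (opDet m n (fun k l => (B k l).map (Complex.ofReal))
          *ᵥ (fun jj => ∏ p, x p (jj p))) := by
  intro i
  funext ii
  rw [Pi.smul_apply, opDet_mulVec, opDet_mulVec]
  set N : Matrix (Fin m) (Fin m) ℂ :=
    Matrix.of fun k l => ((B k l).map (Complex.ofReal) *ᵥ x k) (ii k) with hN
  have h1 : (Matrix.of fun k l => ((if l = i then (A k).map (Complex.ofReal)
      else (B k l).map (Complex.ofReal)) *ᵥ x k) (ii k))
      = N.updateCol i (N *ᵥ lam) := by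
    ext k l
    rw [Matrix.updateCol_apply]
    by_cases h : l = i <;> simp only [h, if_true, if_false, Matrix.of_apply]
    · have := congrFun (heig k) (ii k)
      simp only [Finset.sum_apply, Pi.smul_apply, smul_eq_mul] at this
      rw [this]
      simp [hN, mulVec, dotProduct, mul_comm]
    · rfl
  rw [h1]
  have h2 : (N.updateCol i (N *ᵥ lam)).det = Matrix.cramer N (N *ᵥ lam) i :=
    (Matrix.cramer_apply N (N *ᵥ lam) i).symm
  rw [h2, Matrix.cramer_eq_adjugate_mulVec, Matrix.mulVec_mulVec, Matrix.adjugate_mul,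
    Matrix.smul_mulVec, Matrix.one_mulVec]
  simp [smul_eq_mul, mul_comm]
end

section
/- Let Δ_m and Δ_0 be square real matrices of the same size, and let (λ_i, x_i, y_i), i = 1,…,q, be eigentriples of the pencil (Δ_m, Δ_0): Δ_m x_i = λ_i Δ_0 x_i and y_i^T Δ_m = λ_i y_i^T Δ_0. Assume y_i^T Δ_m x_i ≠ 0 for each i and y_i^T Δ_m x_j = 0 for all i ≠ j. Define the deflated matrix Δ_0^{defl} = Δ_0 − ∑_{i=1}^q (1 / (y_i^T Δ_m x_i)) Δ_0 x_i y_i^T Δ_m. Then: (a) Δ_0^{defl} x_j = 0 for every j = 1,…,q (so the found eigenvalues are deflated to infinity); and (b) if x satisfies Δ_m x = μ Δ_0 x and y_i^T Δ_m x = 0 for all i = 1,…,q, then Δ_m x = μ Δ_0^{defl} x, i.e. the remaining eigenpairs are preserved. -/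
open Matrix

lemma vecMulVec_mulVec' {N : ℕ} (a b v : Fin N → ℝ) :
    Matrix.vecMulVec a b *ᵥ v = (b ⬝ᵥ v) • a := by
  ext k
  simp only [mulVec, dotProduct, vecMulVec_apply, Pi.smul_apply, smul_eq_mul,
    Finset.sum_mul]
  exact Finset.sum_congr rfl fun l _ => by ring

lemma sum_mulVec' {N q : ℕ} (M : Fin q → Matrix (Fin N) (Fin N) ℝ) (v : Fin N → ℝ) :
    (∑ i, M i) *ᵥ v = ∑ i, M i *ᵥ v := by
  ext k
  simp only [mulVec, dotProduct, Matrix.sum_apply, Finset.sum_apply, Finset.sum_mul]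
  exact Finset.sum_comm

/-- Hotelling deflation for the pencil `(Δm, Δ0)`. Given eigentriples
`(λ i, x i, y i)`, `i = 1, …, q`, with `y i ⬝ᵥ Δm x i ≠ 0` and the bi-orthogonality
`y i ⬝ᵥ Δm x j = 0` for `i ≠ j`, the deflated matrix
`Δ0' = Δ0 − ∑ i, (y i ⬝ᵥ Δm x i)⁻¹ • (Δ0 x i) (y iᵀ Δm)` satisfies:
(a) `Δ0' *ᵥ x j = 0` for every `j` (found eigenvalues are deflated to infinity), and
(b) every eigenpair `(μ, x)` with `y i ⬝ᵥ Δm x = 0` for all `i` is preserved: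
`Δm *ᵥ x = μ • (Δ0' *ᵥ x)`. -/
theorem hotelling_deflation
    (N q : ℕ) (Δm Δ0 : Matrix (Fin N) (Fin N) ℝ)
    (lam : Fin q → ℝ) (x y : Fin q → Fin N → ℝ)
    (hx0 : ∀ i, x i ≠ 0) (hy0 : ∀ i, y i ≠ 0)
    (hx : ∀ i, Δm *ᵥ x i = lam i • (Δ0 *ᵥ x i))
    (hy : ∀ i, y i ᵥ* Δm = lam i • (y i ᵥ* Δ0))
    (hnz : ∀ i, y i ⬝ᵥ (Δm *ᵥ x i) ≠ 0)
    (horth : ∀ i j, i ≠ j → y i ⬝ᵥ (Δm *ᵥ x j) = 0) :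
    (∀ j, (Δ0 - ∑ i, (y i ⬝ᵥ (Δm *ᵥ x i))⁻¹ •
        Matrix.vecMulVec (Δ0 *ᵥ x i) (y i ᵥ* Δm)) *ᵥ x j = 0)
    ∧ ∀ (mu : ℝ) (xv : Fin N → ℝ), Δm *ᵥ xv = mu • (Δ0 *ᵥ xv) →
        (∀ i, y i ⬝ᵥ (Δm *ᵥ xv) = 0) →
        Δm *ᵥ xv = mu • ((Δ0 - ∑ i, (y i ⬝ᵥ (Δm *ᵥ x i))⁻¹ •
            Matrix.vecMulVec (Δ0 *ᵥ x i) (y i ᵥ* Δm)) *ᵥ xv) := by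
  have key : ∀ v : Fin N → ℝ,
      (∑ i, (y i ⬝ᵥ (Δm *ᵥ x i))⁻¹ •
        Matrix.vecMulVec (Δ0 *ᵥ x i) (y i ᵥ* Δm)) *ᵥ v
      = ∑ i, ((y i ⬝ᵥ (Δm *ᵥ x i))⁻¹ * (y i ⬝ᵥ (Δm *ᵥ v))) • (Δ0 *ᵥ x i) := by
    intro v
    rw [sum_mulVec']
    refine Finset.sum_congr rfl fun i _ => ?_
    rw [smul_mulVec, vecMulVec_mulVec', ← Matrix.dotProduct_mulVec, smul_smul]
  constructor
  · intro j
    rw [sub_mulVec, key, Finset.sum_eq_single j]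
    · rw [inv_mul_cancel₀ (hnz j), one_smul, sub_self]
    · intro i _ hij
      rw [horth i j hij, mul_zero, zero_smul]
    · simp
  · intro mu xv hxv hvo
    rw [sub_mulVec, key]
    simp only [hvo, mul_zero, zero_smul, Finset.sum_const_zero, sub_zero]
    exact hxv
end
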